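/- The graph G_t^k (with the edges inside each X-set removed) is t-degenerate and bipartite. -/

import Mathlib

/-- `G` is `d`-degenerate. -/
def Degenerate {V : Type*} (G : SimpleGraph V) (d : ℕ) : Prop :=
  ∀ A : Set V, A.Finite → A.Nonempty → ∃ a ∈ A, {b ∈ A | G.Adj a b}.ncard ≤ d

/-- Vertices of `G_t`: `Sum.inl i` is `x_i`, `Sum.inr (Sum.inl j)` is `y_j`,
`Sum.inr (Sum.inr ())` is `z`. -/
abbrev GtV (t : ℕ) := Fin t ⊕ (Fin t ⊕ Unit)

/-- Base relation for `G_t` with the clique edges inside `X` removed: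
`X` and `Y` are independent sets, `x_i ~ y_j` iff `i ≠ j`, and `z` is adjacent
exactly to all of `Y`. -/
def GtRelNoClique (t : ℕ) : GtV t → GtV t → Prop
  | .inl i, .inr (.inl j) => i ≠ j
  | .inr (.inl _), .inr (.inr _) => True
  | _, _ => False

/-- Vertices of `G_t^k`: `k` disjoint copies of `G_t` plus a hub vertex `s`. -/
abbrev GtkV (t k : ℕ) := (Fin k × GtV t) ⊕ Unit

/-- Base relation for `G_t^k` with the `X`-clique edges removed: each copy
carries `GtRelNoClique`, and the hub `s` is adjacent to all vertices of every
copy's `X`-set. -/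
def GtkRelNoClique (t k : ℕ) : GtkV t k → GtkV t k → Prop
  | .inl (c, u), .inl (c', u') => c = c' ∧ GtRelNoClique t u u'
  | .inr _, .inl (_, .inl _) => True
  | .inl (_, .inl _), .inr _ => True
  | _, _ => False

/-- The graph `G_t^k` with the edges inside each `X`-set removed. -/
def GtkNoClique (t k : ℕ) : SimpleGraph (GtkV t k) :=
  SimpleGraph.fromRel (GtkRelNoClique t k)

/-! Every vertex other than the hub `s` has at most `t` neighbours: `x_i` sees `s` and the `y_j`
with `j ≠ i`, `y_j` sees `z` and the `x_i` with `i ≠ j`, and `z` sees the `t` vertices `y_j`.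
So a finite vertex set either contains such a vertex or is `{s}`, which has no neighbour in
itself. The two colour classes are `{s} ∪ ⋃ Y` and `⋃ X ∪ {z_1, …, z_k}`. -/

theorem degenerate_of_forall_ne_encard_neighborSet_le {V : Type*} (G : SimpleGraph V) (d : ℕ)
    (v₀ : V) (h : ∀ a ≠ v₀, (G.neighborSet a).encard ≤ d) : Degenerate G d := by
  intro A hA ⟨a₀, ha₀⟩
  by_cases hv : ∃ a ∈ A, a ≠ v₀
  · obtain ⟨a, haA, hav⟩ := hv
    refine ⟨a, haA, ?_⟩
    have hsub : {b ∈ A | G.Adj a b} ⊆ G.neighborSet a := fun _ hb => hb.2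
    rw [← ENat.natCast_le_natCast, (hA.subset (Set.sep_subset _ _)).cast_ncard_eq]
    exact (Set.encard_le_encard hsub).trans (h a hav)
  · push Not at hv
    refine ⟨a₀, ha₀, ?_⟩
    have hempty : {b ∈ A | G.Adj a₀ b} = ∅ := by
      refine Set.eq_empty_of_forall_notMem fun b ⟨hbA, hadj⟩ => ?_
      rw [hv a₀ ha₀, hv b hbA] at hadj
      exact G.loopless.irrefl _ hadj
    simp [hempty]

theorem encard_range_fin_le {α : Type*} {t : ℕ} (f : Fin t → α) : (Set.range f).encard ≤ t := by
  simpa [Set.image_univ] using Set.encard_image_le f Set.univ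

namespace GtkNoClique

variable {t k : ℕ}

theorem adj_iff {a b : GtkV t k} :
    (GtkNoClique t k).Adj a b ↔ a ≠ b ∧ (GtkRelNoClique t k a b ∨ GtkRelNoClique t k b a) :=
  SimpleGraph.fromRel_adj _ _ _

abbrev hub : GtkV t k := .inr ()

theorem exists_neighborSet_subset_range (a : GtkV t k) (ha : a ≠ hub) :
    ∃ f : Fin t → GtkV t k, (GtkNoClique t k).neighborSet a ⊆ Set.range f := by
  rcases a with ⟨c, i | j | ⟨⟩⟩ | ⟨⟩
  · refine ⟨fun j => if j = i then hub else .inl (c, .inr (.inl j)), ?_⟩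
    rintro (⟨c', i' | j' | ⟨⟩⟩ | ⟨⟩) hb
    all_goals simp_all [adj_iff, GtkRelNoClique, GtRelNoClique]
    exact ⟨j', if_neg (Ne.symm hb.2)⟩
  · refine ⟨fun i => if i = j then .inl (c, .inr (.inr ())) else .inl (c, .inl i), ?_⟩
    rintro (⟨c', i' | j' | ⟨⟩⟩ | ⟨⟩) hb
    all_goals simp_all [adj_iff, GtkRelNoClique, GtRelNoClique]
    exact ⟨i', if_neg hb.2⟩
  · refine ⟨fun j => .inl (c, .inr (.inl j)), ?_⟩
    rintro (⟨c', i' | j' | ⟨⟩⟩ | ⟨⟩) hb <;>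
      simp_all [adj_iff, GtkRelNoClique, GtRelNoClique]
  · exact absurd rfl ha

theorem encard_neighborSet_le (a : GtkV t k) (ha : a ≠ hub) :
    ((GtkNoClique t k).neighborSet a).encard ≤ t := by
  obtain ⟨f, hf⟩ := exists_neighborSet_subset_range a ha
  exact (Set.encard_le_encard hf).trans (encard_range_fin_le f)

def bipartition : GtkV t k → Fin 2
  | .inr _ | .inl (_, .inr (.inl _)) => 0
  | .inl (_, .inl _) | .inl (_, .inr (.inr _)) => 1

theorem bipartition_ne_of_adj {a b : GtkV t k} (h : (GtkNoClique t k).Adj a b) :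
    bipartition a ≠ bipartition b := by
  rcases a with ⟨c, i | j | ⟨⟩⟩ | ⟨⟩ <;> rcases b with ⟨c', i' | j' | ⟨⟩⟩ | ⟨⟩ <;>
    simp_all [adj_iff, bipartition, GtkRelNoClique, GtRelNoClique]

end GtkNoClique

theorem stmt16 (t k : ℕ) :
    Degenerate (GtkNoClique t k) t ∧ (GtkNoClique t k).Colorable 2 :=
  ⟨degenerate_of_forall_ne_encard_neighborSet_le _ t GtkNoClique.hub
    GtkNoClique.encard_neighborSet_le,
    ⟨.mk GtkNoClique.bipartition GtkNoClique.bipartition_ne_of_adj⟩⟩
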